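/- arXiv:2406.19377 — 2 statements merged into one kernel-verified Lean document; each statement's English description precedes it below -/
import Mathlib

section
/- Let k ≤ n be positive integers and let G be a simple graph on vertex set {1,…,n} whose clique number satisfies ω(G) ≥ k. Then the maximum of Σ_{(i,j)∈E} P_{ii} P_{jj} over P ∈ Gr(k,n) equals k²(1 − 1/ω(G)), and this maximum is attained. -/
open Matrix BigOperators

/-- The projection model of the Grassmannian `Gr(k,n)`: real symmetric idempotent
`n × n` matrices of trace `k`. -/
def Grassmannian (k n : ℕ) : Set (Matrix (Fin n) (Fin n) ℝ) :=
  {P | Pᵀ = P ∧ P * P = P ∧ P.trace = (k : ℝ)}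

/-!
Upper bound: the diagonal `x` of a projection of trace `k` is nonnegative with `∑ x = k`, and
the Motzkin–Straus inequality `ω • xᵀ A x ≤ (ω - 1) (∑ x)²` holds for every nonnegative `x`.
It is proved by induction on the support of `x`: on a clique it is Cauchy–Schwarz, and
otherwise moving the weight of a vertex onto a non-adjacent vertex of larger neighbourhood
weight does not decrease `xᵀ A x`.

Lower bound: a maximum clique of size `m` carries a rank `k` projection with constant
diagonal `k / m`, the Gram matrix of the harmonic frame `(e^{iθₐ x})` with frequencies
`θₐ = π (2a + 1 - k) / m` symmetric about `0`, which makes the Gram matrix real, extended by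
zero outside the clique. Its value is `m (m - 1) (k / m)² = k² (1 - 1 / m)`.
-/

namespace SimpleGraph

variable {V R : Type*} [Fintype V] [CommRing R] (G : SimpleGraph V) [DecidableRel G.Adj]

theorem sum_sum_ite_adj_mul_eq_dotProduct_adjMatrix_mulVec (x : V → R) :
    ∑ i, ∑ j, (if G.Adj i j then x i * x j else 0) = x ⬝ᵥ G.adjMatrix R *ᵥ x := by
  simp only [dotProduct, mulVec, adjMatrix_apply, Finset.mul_sum]
  refine Finset.sum_congr rfl fun i _ => Finset.sum_congr rfl fun j _ => ?_
  split_ifs <;> simp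

theorem dotProduct_adjMatrix_mulVec_comm (x y : V → R) :
    x ⬝ᵥ G.adjMatrix R *ᵥ y = y ⬝ᵥ G.adjMatrix R *ᵥ x := by
  rw [dotProduct_mulVec, dotProduct_comm, ← mulVec_transpose, G.transpose_adjMatrix]

theorem dotProduct_adjMatrix_mulVec_add_smul (x u : V → R) (t : R) :
    (x + t • u) ⬝ᵥ G.adjMatrix R *ᵥ (x + t • u) =
      x ⬝ᵥ G.adjMatrix R *ᵥ x + 2 * t * (u ⬝ᵥ G.adjMatrix R *ᵥ x) +
        t ^ 2 * (u ⬝ᵥ G.adjMatrix R *ᵥ u) := by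
  simp only [mulVec_add, mulVec_smul, add_dotProduct, dotProduct_add, smul_dotProduct,
    dotProduct_smul, G.dotProduct_adjMatrix_mulVec_comm x u, smul_eq_mul]
  ring

variable [DecidableEq V]

theorem IsClique.dotProduct_adjMatrix_mulVec_ite {s : Finset V} (hs : G.IsClique (s : Set V))
    (c : R) :
    (fun i => if i ∈ s then c else 0) ⬝ᵥ G.adjMatrix R *ᵥ (fun i => if i ∈ s then c else 0) =
      s.card * (s.card - 1) * c ^ 2 := by
  rw [← sum_sum_ite_adj_mul_eq_dotProduct_adjMatrix_mulVec]
  have hrow : ∀ i, (∑ j, if G.Adj i j then (if i ∈ s then c else 0) * (if j ∈ s then c else 0)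
      else 0) = if i ∈ s then (s.card - 1 : R) * c ^ 2 else 0 := by
    intro i
    split_ifs with hi
    · have hterm : ∀ j, (if G.Adj i j then c * (if j ∈ s then c else 0) else 0) =
          if j ∈ s.erase i then c ^ 2 else 0 := by
        intro j
        by_cases hj : j ∈ s
        · by_cases hij : i = j
          · subst hij; simp
          · simp [hs hi hj hij, hj, Ne.symm hij, sq]
        · simp [hj]
      simp only [hterm, Finset.sum_ite_mem, Finset.univ_inter, Finset.sum_const,
        Finset.card_erase_of_mem hi, nsmul_eq_mul]
      rw [Nat.cast_pred (Finset.card_pos.2 ⟨i, hi⟩)]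
    · simp
  simp only [hrow, Finset.sum_ite_mem, Finset.univ_inter, Finset.sum_const, nsmul_eq_mul]
  ring

variable [LinearOrder R] [IsStrictOrderedRing R]

theorem dotProduct_adjMatrix_mulVec_le_sq_sum_sub_sum_sq {x : V → R} (hx : 0 ≤ x) :
    x ⬝ᵥ G.adjMatrix R *ᵥ x ≤ (∑ i, x i) ^ 2 - ∑ i, x i ^ 2 := by
  rw [← sum_sum_ite_adj_mul_eq_dotProduct_adjMatrix_mulVec, le_sub_iff_add_le, sq,
    Finset.sum_mul_sum]
  have hdiag : ∑ i, x i ^ 2 = ∑ i, ∑ j, if i = j then x i * x j else 0 := by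
    simp [sq]
  rw [hdiag, ← Finset.sum_add_distrib]
  refine Finset.sum_le_sum fun i _ => ?_
  rw [← Finset.sum_add_distrib]
  refine Finset.sum_le_sum fun j _ => ?_
  by_cases hij : i = j
  · subst hij; simp
  · split_ifs with hadj
    · simp
    · simpa using mul_nonneg (hx i) (hx j)

theorem dotProduct_adjMatrix_mulVec_le_of_shift (x : V → R) {a b : V}
    (hnadj : ¬ G.Adj a b) (hxb : 0 ≤ x b)
    (hle : (G.adjMatrix R *ᵥ x) b ≤ (G.adjMatrix R *ᵥ x) a) :
    x ⬝ᵥ G.adjMatrix R *ᵥ x ≤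
      (x + x b • (Pi.single a 1 - Pi.single b 1)) ⬝ᵥ
        G.adjMatrix R *ᵥ (x + x b • (Pi.single a 1 - Pi.single b 1)) := by
  have hnadj' : ¬ G.Adj b a := fun h => hnadj h.symm
  rw [dotProduct_adjMatrix_mulVec_add_smul]
  have huu : (Pi.single a 1 - Pi.single b 1 : V → R) ⬝ᵥ
      G.adjMatrix R *ᵥ (Pi.single a 1 - Pi.single b 1) = 0 := by
    simp [sub_dotProduct, mulVec_sub, dotProduct_sub, hnadj, hnadj']
  have hux : (Pi.single a 1 - Pi.single b 1 : V → R) ⬝ᵥ G.adjMatrix R *ᵥ x =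
      (G.adjMatrix R *ᵥ x) a - (G.adjMatrix R *ᵥ x) b := by
    simp [sub_dotProduct]
  rw [huu, hux]
  nlinarith [mul_nonneg hxb (sub_nonneg.2 hle)]

theorem cliqueNum_mul_dotProduct_adjMatrix_mulVec_le_of_isClique {s : Finset V}
    (hs : G.IsClique (s : Set V)) {x : V → R} (hx : 0 ≤ x) (hxs : ∀ i ∉ s, x i = 0) :
    (G.cliqueNum : R) * (x ⬝ᵥ G.adjMatrix R *ᵥ x) ≤ (G.cliqueNum - 1) * (∑ i, x i) ^ 2 := by
  have hω : (0 : R) ≤ G.cliqueNum := Nat.cast_nonneg _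
  have hcs : (∑ i, x i) ^ 2 ≤ G.cliqueNum * ∑ i, x i ^ 2 :=
    calc (∑ i, x i) ^ 2 = (∑ i ∈ s, x i) ^ 2 := by
          rw [Finset.sum_subset (Finset.subset_univ s) fun i _ hi => hxs i hi]
      _ ≤ s.card * ∑ i ∈ s, x i ^ 2 := sq_sum_le_card_mul_sum_sq
      _ ≤ G.cliqueNum * ∑ i, x i ^ 2 :=
          mul_le_mul (Nat.cast_le.2 (hs.card_le_cliqueNum))
            (Finset.sum_le_sum_of_subset_of_nonneg (Finset.subset_univ s)
              fun i _ _ => sq_nonneg (x i))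
            (Finset.sum_nonneg fun i _ => sq_nonneg (x i)) hω
  nlinarith [mul_le_mul_of_nonneg_left (G.dotProduct_adjMatrix_mulVec_le_sq_sum_sub_sum_sq hx) hω]

/-- The Motzkin–Straus inequality. -/
theorem cliqueNum_mul_dotProduct_adjMatrix_mulVec_le {x : V → R} (hx : 0 ≤ x) :
    (G.cliqueNum : R) * (x ⬝ᵥ G.adjMatrix R *ᵥ x) ≤ (G.cliqueNum - 1) * (∑ i, x i) ^ 2 := by
  suffices ∀ s : Finset V, ∀ x : V → R, 0 ≤ x → (∀ i ∉ s, x i = 0) →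
      (G.cliqueNum : R) * (x ⬝ᵥ G.adjMatrix R *ᵥ x) ≤ (G.cliqueNum - 1) * (∑ i, x i) ^ 2 from
    this Finset.univ x hx (by simp)
  intro s
  induction s using Finset.strongInduction with
  | H s ih =>
  intro x hx hxs
  by_cases hs : G.IsClique (s : Set V)
  · exact G.cliqueNum_mul_dotProduct_adjMatrix_mulVec_le_of_isClique hs hx hxs
  obtain ⟨a, ha, b, hb, hab, hnadj⟩ : ∃ a ∈ s, ∃ b ∈ s, a ≠ b ∧ ¬ G.Adj a b := by
    simpa [isClique_iff, Set.Pairwise] using hs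
  wlog hle : (G.adjMatrix R *ᵥ x) b ≤ (G.adjMatrix R *ᵥ x) a generalizing a b
  · exact this b hb a ha hab.symm (fun h => hnadj h.symm) (le_of_not_ge hle)
  set y := x + x b • (Pi.single a 1 - Pi.single b 1) with hy
  have hy_apply : ∀ i, y i = if i = b then 0 else if i = a then x a + x b else x i := by
    intro i
    by_cases hib : i = b
    · subst hib; simp [hy, hab.symm]
    · by_cases hia : i = a
      · subst hia; simp [hy, hab]
      · simp [hy, hia, hib]
  have hy_nonneg : 0 ≤ y := fun i => by
    rw [hy_apply]; split_ifs
    exacts [le_rfl, add_nonneg (hx a) (hx b), hx i]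
  have hys : ∀ i ∉ s.erase b, y i = 0 := fun i hi => by
    rw [hy_apply]; split_ifs with hib hia
    · rfl
    · exact absurd (hia ▸ Finset.mem_erase.2 ⟨hab, ha⟩) hi
    · exact hxs i fun his => hi (Finset.mem_erase.2 ⟨hib, his⟩)
  have hy_sum : ∑ i, y i = ∑ i, x i := by
    simp [hy, Finset.sum_add_distrib, ← Finset.mul_sum, Finset.sum_sub_distrib]
  calc (G.cliqueNum : R) * (x ⬝ᵥ G.adjMatrix R *ᵥ x)
      ≤ G.cliqueNum * (y ⬝ᵥ G.adjMatrix R *ᵥ y) :=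
        mul_le_mul_of_nonneg_left (G.dotProduct_adjMatrix_mulVec_le_of_shift x hnadj (hx b) hle)
          (Nat.cast_nonneg _)
    _ ≤ (G.cliqueNum - 1) * (∑ i, y i) ^ 2 := ih _ (Finset.erase_ssubset hb) y hy_nonneg hys
    _ = (G.cliqueNum - 1) * (∑ i, x i) ^ 2 := by rw [hy_sum]

end SimpleGraph

section HarmonicFrame

open Complex
open scoped Real

theorem sum_exp_two_pi_mul_I_mul_div_eq_zero {m : ℕ} {s : ℤ} (hs : ¬ (m : ℤ) ∣ s) :
    ∑ x : Fin m, exp (2 * π * I * s * x / m) = 0 := by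
  rcases eq_or_ne m 0 with rfl | hm
  · simp
  have hζ := isPrimitiveRoot_exp m hm
  set r := exp (2 * π * I / m) ^ s with hr_def
  have hr : r ≠ 1 := by rwa [Ne, hζ.zpow_eq_one_iff_dvd]
  have hrm : r ^ m = 1 := by
    rw [← zpow_natCast, ← _root_.zpow_mul, mul_comm s, _root_.zpow_mul, zpow_natCast,
      hζ.pow_eq_one, _root_.one_zpow]
  calc ∑ x : Fin m, exp (2 * π * I * s * x / m) = ∑ x : Fin m, r ^ (x : ℕ) := by
        refine Finset.sum_congr rfl fun x _ => ?_
        rw [hr_def, ← exp_int_mul, ← exp_nat_mul]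
        ring_nf
    _ = 0 := by
        rw [Fin.sum_univ_eq_sum_range (r ^ ·), geom_sum_eq hr, hrm, sub_self, zero_div]

theorem sum_exp_mul_I_eq_sum_cos (k : ℕ) (z : ℂ) :
    ∑ a : Fin k, exp ((2 * a + 1 - k) * z * I) = ∑ a : Fin k, cos ((2 * a + 1 - k) * z) := by
  have hrev : ∑ a : Fin k, exp (-((2 * a + 1 - k) * z) * I) =
      ∑ a : Fin k, exp ((2 * a + 1 - k) * z * I) := by
    refine Fintype.sum_equiv Fin.revPerm _ _ fun a => ?_
    rw [Fin.revPerm_apply, Fin.val_rev, Nat.cast_sub a.isLt]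
    push_cast
    ring_nf
  have h2 : ∀ a : Fin k, cos ((2 * a + 1 - k) * z) =
      (exp ((2 * a + 1 - k) * z * I) + exp (-((2 * a + 1 - k) * z) * I)) / 2 := fun a => by
    rw [← two_cos]; ring
  simp only [h2, ← Finset.sum_div, Finset.sum_add_distrib, hrev]
  ring

noncomputable def harmonicFrame (k m : ℕ) : Matrix (Fin k) (Fin m) ℂ :=
  fun a x => exp ((2 * a + 1 - k) * (π * x / m) * I) / (√m : ℝ)

noncomputable def harmonicProjection (k m : ℕ) : Matrix (Fin m) (Fin m) ℝ :=
  fun x y => (∑ a : Fin k, Real.cos ((2 * a + 1 - k) * (π * (y - x) / m))) / m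

variable {k m : ℕ}

theorem sqrt_mul_sqrt_natCast (m : ℕ) : ((√m : ℝ) : ℂ) * (√m : ℝ) = m := by
  rw [← ofReal_mul, Real.mul_self_sqrt (Nat.cast_nonneg m), ofReal_natCast]

theorem star_harmonicFrame_apply (a : Fin k) (x : Fin m) :
    star (harmonicFrame k m a x) = exp (-((2 * a + 1 - k) * (π * x / m) * I)) / (√m : ℝ) := by
  simp [harmonicFrame, ← exp_conj, map_div₀, map_ofNat]

theorem harmonicFrame_mul_star (a b : Fin k) (x : Fin m) :
    harmonicFrame k m a x * star (harmonicFrame k m b x) =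
      exp (2 * π * I * ((a - b : ℤ) : ℂ) * x / m) / m := by
  rw [star_harmonicFrame_apply, harmonicFrame, div_mul_div_comm, ← exp_add,
    sqrt_mul_sqrt_natCast]
  congr 2
  push_cast
  ring

theorem star_harmonicFrame_mul (a : Fin k) (x y : Fin m) :
    star (harmonicFrame k m a x) * harmonicFrame k m a y =
      exp ((2 * a + 1 - k) * (π * (y - x) / m) * I) / m := by
  rw [star_harmonicFrame_apply, harmonicFrame, div_mul_div_comm, ← exp_add,
    sqrt_mul_sqrt_natCast]
  congr 2
  ring

theorem harmonicFrame_mul_conjTranspose (hkm : k ≤ m) :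
    harmonicFrame k m * (harmonicFrame k m)ᴴ = 1 := by
  ext a b
  have hm : (m : ℂ) ≠ 0 := Nat.cast_ne_zero.2 (a.pos.trans_le hkm).ne'
  simp only [mul_apply, conjTranspose_apply, harmonicFrame_mul_star, ← Finset.sum_div]
  rcases eq_or_ne a b with rfl | hab
  · simp [hm]
  · have hdvd : ¬ (m : ℤ) ∣ (a - b : ℤ) := fun h => hab (Fin.ext (by
      have := Int.eq_zero_of_abs_lt_dvd h (by rw [abs_lt]; omega)
      omega))
    rw [sum_exp_two_pi_mul_I_mul_div_eq_zero hdvd, zero_div, one_apply_ne hab]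

theorem map_ofReal_harmonicProjection :
    (harmonicProjection k m).map ofReal = (harmonicFrame k m)ᴴ * harmonicFrame k m := by
  ext x y
  simp only [map_apply, harmonicProjection, mul_apply, conjTranspose_apply,
    star_harmonicFrame_mul, ← Finset.sum_div, sum_exp_mul_I_eq_sum_cos]
  push_cast
  rfl

theorem harmonicProjection_apply_self (x : Fin m) : harmonicProjection k m x x = k / m := by
  simp [harmonicProjection]

end HarmonicFrame

namespace Grassmannian

variable {k m n : ℕ} {P : Matrix (Fin n) (Fin n) ℝ}

theorem diag_nonneg (hP : P ∈ Grassmannian k n) (i : Fin n) : 0 ≤ P i i := by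
  have hPP : Pᴴ * P = P := by rw [conjTranspose_eq_transpose_of_trivial, hP.1, hP.2.1]
  exact hPP ▸ (posSemidef_conjTranspose_mul_self P).diag_nonneg

theorem sum_diag (hP : P ∈ Grassmannian k n) : ∑ i, P i i = k := hP.2.2

theorem transpose_mul_mul_mem {Q : Matrix (Fin m) (Fin m) ℝ} (hQ : Q ∈ Grassmannian k m)
    {F : Matrix (Fin m) (Fin n) ℝ} (hF : F * Fᵀ = 1) : Fᵀ * Q * F ∈ Grassmannian k n := by
  obtain ⟨hsymm, hidem, htrace⟩ := hQ
  refine ⟨?_, ?_, ?_⟩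
  · rw [transpose_mul, transpose_mul, transpose_transpose, hsymm, Matrix.mul_assoc]
  · calc Fᵀ * Q * F * (Fᵀ * Q * F) = Fᵀ * Q * (F * Fᵀ) * Q * F := by
          simp only [Matrix.mul_assoc]
      _ = Fᵀ * Q * F := by rw [hF, Matrix.mul_one, Matrix.mul_assoc Fᵀ Q Q, hidem]
  · rw [trace_mul_cycle, hF, Matrix.one_mul, htrace]

theorem mem_of_map_ofReal_eq {V : Matrix (Fin k) (Fin n) ℂ} (hV : V * Vᴴ = 1)
    (hP : P.map Complex.ofReal = Vᴴ * V) : P ∈ Grassmannian k n := by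
  have hinj := Matrix.map_injective (m := Fin n) (n := Fin n) Complex.ofReal_injective
  refine ⟨hinj ?_, hinj ?_, Complex.ofReal_injective ?_⟩
  · change Pᵀ.map Complex.ofReal = P.map Complex.ofReal
    rw [← conjTranspose_eq_transpose_of_trivial,
      conjTranspose_map _ fun x => (Complex.conj_ofReal x).symm, hP, conjTranspose_mul,
      conjTranspose_conjTranspose]
  · change (P * P).map Complex.ofRealHom = P.map Complex.ofRealHom
    rw [Matrix.map_mul]
    change P.map Complex.ofReal * P.map Complex.ofReal = P.map Complex.ofReal
    rw [hP, Matrix.mul_assoc, ← Matrix.mul_assoc V, hV, Matrix.one_mul]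
  · change Complex.ofRealHom.toAddMonoidHom P.trace = _
    rw [AddMonoidHom.map_trace]
    change (P.map Complex.ofReal).trace = _
    rw [hP, trace_mul_comm, hV, trace_one, Fintype.card_fin, Complex.ofReal_natCast]

end Grassmannian

theorem exists_mem_grassmannian_diag_eq_ite {k n : ℕ} (S : Finset (Fin n)) (hk : k ≤ S.card) :
    ∃ P ∈ Grassmannian k n, ∀ i, P i i = if i ∈ S then (k : ℝ) / S.card else 0 := by
  set f := S.orderEmbOfFin rfl
  set F : Matrix (Fin S.card) (Fin n) ℝ := (1 : Matrix (Fin n) (Fin n) ℝ).submatrix f id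
  have hF : F * Fᵀ = 1 := by
    rw [transpose_submatrix, transpose_one, ← submatrix_mul _ _ _ _ _ Function.bijective_id,
      Matrix.one_mul]
    exact submatrix_one_embedding f.toEmbedding
  refine ⟨Fᵀ * harmonicProjection k S.card * F,
    Grassmannian.transpose_mul_mul_mem (Grassmannian.mem_of_map_ofReal_eq
      (harmonicFrame_mul_conjTranspose hk) map_ofReal_harmonicProjection) hF, fun i => ?_⟩
  split_ifs with hi
  · obtain ⟨x, rfl⟩ : i ∈ Set.range f := by rwa [Finset.range_orderEmbOfFin]
    simp [F, mul_apply, one_apply, harmonicProjection_apply_self]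
  · have hi' : ∀ x, f x ≠ i := fun x hx => hi (hx ▸ S.orderEmbOfFin_mem rfl x)
    simp [F, mul_apply, one_apply, hi']

theorem clique_number_as_grassmannian_QP_general (n k : ℕ) (hk : 0 < k)
    (G : SimpleGraph (Fin n)) [DecidableRel G.Adj] (hω : k ≤ G.cliqueNum) :
    IsGreatest
      {v : ℝ | ∃ P ∈ Grassmannian k n,
        v = ∑ i, ∑ j, if G.Adj i j then P i i * P j j else 0}
      ((k : ℝ) ^ 2 * (1 - 1 / (G.cliqueNum : ℝ))) := by
  have hω0 : (0 : ℝ) < G.cliqueNum := by exact_mod_cast hk.trans_le hω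
  refine ⟨?_, ?_⟩
  · obtain ⟨S, hS⟩ := G.exists_isNClique_cliqueNum
    obtain ⟨P, hP, hdiag⟩ := exists_mem_grassmannian_diag_eq_ite S (hS.card_eq ▸ hω)
    refine ⟨P, hP, ?_⟩
    rw [G.sum_sum_ite_adj_mul_eq_dotProduct_adjMatrix_mulVec fun i => P i i, funext hdiag,
      hS.isClique.dotProduct_adjMatrix_mulVec_ite, hS.card_eq]
    field_simp
  · rintro _ ⟨P, hP, rfl⟩
    have hMS := G.cliqueNum_mul_dotProduct_adjMatrix_mulVec_le
      (x := fun i => P i i) (Grassmannian.diag_nonneg hP)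
    rw [Grassmannian.sum_diag hP] at hMS
    rw [G.sum_sum_ite_adj_mul_eq_dotProduct_adjMatrix_mulVec fun i => P i i, mul_one_sub,
      le_sub_iff_add_le, ← le_sub_iff_add_le', mul_one_div, div_le_iff₀ hω0]
    linarith

theorem clique_number_as_grassmannian_QP (n k : ℕ) (hk : 0 < k) (hkn : k ≤ n)
    (G : SimpleGraph (Fin n)) [DecidableRel G.Adj] (hω : k ≤ G.cliqueNum) :
    IsGreatest
      {v : ℝ | ∃ P ∈ Grassmannian k n,
        v = ∑ i, ∑ j, if G.Adj i j then P i i * P j j else 0}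
      ((k : ℝ) ^ 2 * (1 - 1 / (G.cliqueNum : ℝ))) :=
  clique_number_as_grassmannian_QP_general n k hk G hω
end

section
/- Let n ≥ 1 and let G be a simple graph on vertex set {1,…,n}. Let 𝒟_n = {X ∈ ℝ^{n×n} : Xᵀ = X, X positive semidefinite, trace(X) = 1} be the set of density matrices. Then the maximum of Σ_{(i,j)∈E} X_{ii} X_{jj} over X ∈ 𝒟_n equals 1 − 1/ω(G), and this maximum is attained. -/
/-!
Only the diagonal `x` of `X` enters, and it ranges over the probability simplex, so this is the
Motzkin–Straus theorem for the quadratic form `x ⬝ᵥ A *ᵥ x` of the adjacency matrix `A`.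
If `a ≠ b` are non-adjacent vertices in the support of `x`, then `A a a = A a b = A b b = 0`, so
moving mass from `a` to `b` changes the form linearly; moving all of `x a` onto whichever of the
two has the larger neighbourhood weight `(A *ᵥ x)` does not decrease the form and shrinks the
support. Hence the maximum is reached on a vector supported on a clique, where the form equals
`1 - ∑ xᵢ²`, which Cauchy–Schwarz bounds by `1 - 1/ω`. The uniform vector on a maximum clique
attains this value.
-/

open Matrix Finset

namespace SimpleGraph

variable {V R : Type*} [Fintype V] (G : SimpleGraph V)

theorem one_le_cliqueNum [Nonempty V] : 1 ≤ G.cliqueNum := by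
  obtain ⟨v⟩ := ‹Nonempty V›
  simpa using IsClique.card_le_cliqueNum (G := G) (t := {v}) (tc := by simp)

theorem sq_sum_le_cliqueNum_mul_sum_sq [CommRing R] [LinearOrder R] [IsStrictOrderedRing R]
    (x : V → R) (hx : G.IsClique (Function.support x)) :
    (∑ i, x i) ^ 2 ≤ G.cliqueNum * ∑ i, x i ^ 2 := by
  classical
  set s := univ.filter (fun i => x i ≠ 0)
  have hs : G.IsClique (s : Set V) := by
    convert hx
    ext
    simp [s]
  have hx_sum : ∑ i ∈ s, x i = ∑ i, x i := sum_subset (subset_univ s) (by simp [s])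
  have hx_sum_sq : ∑ i ∈ s, x i ^ 2 = ∑ i, x i ^ 2 := sum_subset (subset_univ s) (by simp [s])
  rw [← hx_sum, ← hx_sum_sq]
  calc (∑ i ∈ s, x i) ^ 2 ≤ #s * ∑ i ∈ s, x i ^ 2 := sq_sum_le_card_mul_sum_sq
    _ ≤ G.cliqueNum * ∑ i ∈ s, x i ^ 2 := by
      gcongr
      exact IsClique.card_le_cliqueNum (tc := hs)

variable [DecidableRel G.Adj]

section CommRing

variable [CommRing R]

theorem dotProduct_mulVec_adjMatrix_add_single_sub_single [DecidableEq V] (x : V → R)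
    {a b : V} (hab : ¬G.Adj a b) (t : R) :
    (x + (Pi.single b t - Pi.single a t)) ⬝ᵥ G.adjMatrix R *ᵥ (x + (Pi.single b t - Pi.single a t))
      = x ⬝ᵥ G.adjMatrix R *ᵥ x + 2 * t * ((G.adjMatrix R *ᵥ x) b - (G.adjMatrix R *ᵥ x) a) := by
  have hcol : ∀ v, x ⬝ᵥ (G.adjMatrix R).col v = (G.adjMatrix R *ᵥ x) v := by
    intro v
    change (x ᵥ* G.adjMatrix R) v = _
    rw [← mulVec_transpose, transpose_adjMatrix]
  have hba : ¬G.Adj b a := fun h => hab h.symm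
  simp only [add_dotProduct, mulVec_add, dotProduct_add, sub_dotProduct, mulVec_sub,
    dotProduct_sub, single_dotProduct, mulVec_single, dotProduct_smul, hcol]
  simp [hab, hba]
  ring

theorem dotProduct_mulVec_adjMatrix_of_isClique_support (x : V → R)
    (hx : G.IsClique (Function.support x)) :
    x ⬝ᵥ G.adjMatrix R *ᵥ x = (∑ i, x i) ^ 2 - ∑ i, x i ^ 2 := by
  classical
  have hterm : ∀ i j, (if G.Adj i j then x i * x j else 0)
      = x i * x j - if i = j then x i * x j else 0 := by
    intro i j
    by_cases hij : i = j
    · subst hij; simp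
    by_cases hi : x i = 0
    · simp [hi]
    by_cases hj : x j = 0
    · simp [hj]
    simp [hx hi hj hij, hij]
  simp only [dotProduct_mulVec_adjMatrix, hterm, sum_sub_distrib, sum_ite_eq, mem_univ,
    if_true, sq, sum_mul_sum]

end CommRing

section OrderedRing

variable [CommRing R] [LinearOrder R] [IsStrictOrderedRing R]

theorem exists_support_ssubset_dotProduct_mulVec_adjMatrix_ge (x : V → R) (hx : 0 ≤ x)
    (hnc : ¬G.IsClique (Function.support x)) :
    ∃ y : V → R, 0 ≤ y ∧ ∑ i, y i = ∑ i, x i ∧ Function.support y ⊂ Function.support x ∧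
      x ⬝ᵥ G.adjMatrix R *ᵥ x ≤ y ⬝ᵥ G.adjMatrix R *ᵥ y := by
  classical
  obtain ⟨a, ha, b, hb, hab, hnadj⟩ : ∃ a ∈ Function.support x, ∃ b ∈ Function.support x,
      a ≠ b ∧ ¬G.Adj a b := by
    simpa [IsClique, Set.Pairwise] using hnc
  wlog hle : (G.adjMatrix R *ᵥ x) a ≤ (G.adjMatrix R *ᵥ x) b generalizing a b
  · exact this b hb a ha hab.symm (fun h => hnadj h.symm) (le_of_not_ge hle)
  refine ⟨x + (Pi.single b (x a) - Pi.single a (x a)), ?_, ?_, ?_, ?_⟩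
  · intro i
    simp only [Pi.add_apply, Pi.sub_apply, Pi.single_apply, Pi.zero_apply]
    have : 0 ≤ x a := hx a
    have : 0 ≤ x i := hx i
    split_ifs <;> subst_vars <;> linarith
  · simp [sum_add_distrib]
  · rw [Set.ssubset_iff_of_subset]
    · exact ⟨a, ha, by simp [hab.symm]⟩
    · intro i hi
      by_contra hxi
      have hia : i ≠ a := by rintro rfl; exact hxi ha
      have hib : i ≠ b := by rintro rfl; exact hxi hb
      simp_all
  · rw [dotProduct_mulVec_adjMatrix_add_single_sub_single G x hnadj]
    have := mul_nonneg (mul_nonneg zero_le_two (hx a)) (sub_nonneg.mpr hle)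
    linarith

theorem exists_isClique_support_dotProduct_mulVec_adjMatrix_ge (x : V → R) (hx : 0 ≤ x) :
    ∃ y : V → R, 0 ≤ y ∧ ∑ i, y i = ∑ i, x i ∧ G.IsClique (Function.support y) ∧
      x ⬝ᵥ G.adjMatrix R *ᵥ x ≤ y ⬝ᵥ G.adjMatrix R *ᵥ y := by
  induction h : (Function.support x).ncard using Nat.strong_induction_on generalizing x with
  | _ k ih =>
  by_cases hc : G.IsClique (Function.support x)
  · exact ⟨x, hx, rfl, hc, le_rfl⟩
  obtain ⟨y, hy, hy_sum, hy_supp, hxy⟩ :=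
    G.exists_support_ssubset_dotProduct_mulVec_adjMatrix_ge x hx hc
  obtain ⟨z, hz, hz_sum, hz_clique, hyz⟩ := ih _ (h ▸ Set.ncard_lt_ncard hy_supp) y hy rfl
  exact ⟨z, hz, hz_sum.trans hy_sum, hz_clique, hxy.trans hyz⟩

end OrderedRing

section Field

variable [Field R] [LinearOrder R] [IsStrictOrderedRing R]

theorem dotProduct_mulVec_adjMatrix_le_one_sub_one_div_cliqueNum (x : V → R) (hx : 0 ≤ x)
    (hx_sum : ∑ i, x i = 1) :
    x ⬝ᵥ G.adjMatrix R *ᵥ x ≤ 1 - 1 / (G.cliqueNum : R) := by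
  obtain ⟨y, -, hy_sum, hy_clique, hxy⟩ :=
    G.exists_isClique_support_dotProduct_mulVec_adjMatrix_ge x hx
  have hCS := G.sq_sum_le_cliqueNum_mul_sum_sq y hy_clique
  rw [hy_sum, hx_sum, one_pow] at hCS
  have hω : (0 : R) < G.cliqueNum := by
    by_contra! h
    nlinarith [sum_nonneg fun i (_ : i ∈ univ) => sq_nonneg (y i)]
  calc x ⬝ᵥ G.adjMatrix R *ᵥ x ≤ y ⬝ᵥ G.adjMatrix R *ᵥ y := hxy
    _ = 1 - ∑ i, y i ^ 2 := by
      rw [G.dotProduct_mulVec_adjMatrix_of_isClique_support y hy_clique, hy_sum, hx_sum, one_pow]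
    _ ≤ 1 - 1 / (G.cliqueNum : R) := by
      gcongr
      rwa [div_le_iff₀' hω]

theorem exists_dotProduct_mulVec_adjMatrix_eq_one_sub_one_div_cliqueNum [Nonempty V] :
    ∃ x : V → R, 0 ≤ x ∧ ∑ i, x i = 1 ∧
      x ⬝ᵥ G.adjMatrix R *ᵥ x = 1 - 1 / (G.cliqueNum : R) := by
  classical
  obtain ⟨s, hs⟩ := G.exists_isNClique_cliqueNum
  have hω : (0 : R) < G.cliqueNum := by exact_mod_cast G.one_le_cliqueNum
  set x : V → R := fun i => if i ∈ s then 1 / (G.cliqueNum : R) else 0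
  have hx_supp : Function.support x ⊆ s := fun i hi => by
    by_contra h
    exact hi (if_neg h)
  have hx_sum : ∑ i, x i = 1 := by
    simp [x, hs.card_eq, hω.ne']
  refine ⟨x, fun i => by positivity, hx_sum, ?_⟩
  rw [G.dotProduct_mulVec_adjMatrix_of_isClique_support x (hs.isClique.subset hx_supp), hx_sum]
  simp [x, hs.card_eq]
  field_simp

end Field

end SimpleGraph

theorem density_matrix_QP (n : ℕ) (hn : 0 < n)
    (G : SimpleGraph (Fin n)) [DecidableRel G.Adj] :
    IsGreatest
      {v : ℝ | ∃ X : Matrix (Fin n) (Fin n) ℝ, Xᵀ = X ∧ X.PosSemidef ∧ X.trace = 1 ∧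
        v = ∑ i, ∑ j, if G.Adj i j then X i i * X j j else 0}
      (1 - 1 / (G.cliqueNum : ℝ)) := by
  have : Nonempty (Fin n) := Fin.pos_iff_nonempty.mp hn
  constructor
  · obtain ⟨x, hx, hx_sum, hx_val⟩ :=
      G.exists_dotProduct_mulVec_adjMatrix_eq_one_sub_one_div_cliqueNum (R := ℝ)
    refine ⟨diagonal x, diagonal_transpose x, PosSemidef.diagonal hx, by simpa using hx_sum, ?_⟩
    simpa [← G.dotProduct_mulVec_adjMatrix] using hx_val.symm
  · rintro v ⟨X, -, hX, hX_trace, rfl⟩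
    simpa [G.dotProduct_mulVec_adjMatrix] using
      G.dotProduct_mulVec_adjMatrix_le_one_sub_one_div_cliqueNum X.diag
        (fun i => hX.diag_nonneg) hX_trace
end
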